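/- Let L be a dually ms Stone semi-Heyting algebra. Then for all x in L, x* ≤ x⁺, where x⁺ := x′*′. -/

import Mathlib

class SemiHeyting (α : Type*) extends Lattice α, BoundedOrder α where
  himp : α → α → α
  sh1 : ∀ x y : α, x ⊓ himp x y = x ⊓ y
  sh2 : ∀ x y z : α, x ⊓ himp y z = x ⊓ himp (x ⊓ y) (x ⊓ z)
  sh3 : ∀ x : α, himp x x = ⊤

namespace SemiHeyting

variable {α : Type*} [SemiHeyting α]

def star (x : α) : α := himp x ⊥

end SemiHeyting

class DQD (α : Type*) extends SemiHeyting α where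
  prime : α → α
  prime_bot : prime ⊥ = ⊤
  prime_top : prime ⊤ = ⊥
  prime_inf : ∀ x y : α, prime (x ⊓ y) = prime x ⊔ prime y
  prime_prime_sup : ∀ x y : α, prime (prime (x ⊔ y)) = prime (prime x) ⊔ prime (prime y)
  prime_prime_le : ∀ x : α, prime (prime x) ≤ x

class DmsSt (α : Type*) extends DQD α where
  stone : ∀ x : α, SemiHeyting.star x ⊔ SemiHeyting.star (SemiHeyting.star x) = ⊤
  jdm : ∀ x y : α, prime (x ⊔ y) = prime x ⊓ prime y

open SemiHeyting DQD

/-!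
Applying `′` to `x′ ⊓ x′* = ⊥` gives `x″ ⊔ x⁺ = ⊤`, while `x* ⊓ x″ ≤ x* ⊓ x = ⊥`. Semi-Heyting
algebras are distributive, and in a bounded distributive lattice an element disjoint from `b`
lies below every `c` with `b ⊔ c = ⊤`; take `b = x″`, `c = x⁺`.
-/

namespace SemiHeyting

variable {α : Type*} [SemiHeyting α]

theorem le_himp_of_inf_eq {a b c : α} (h : c ⊓ a = c ⊓ b) : c ≤ himp a b := by
  have h2 := sh2 c a b
  rw [h, sh3, inf_top_eq] at h2
  exact inf_eq_left.mp h2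

theorem disjoint_self_star (x : α) : Disjoint x (star x) := by
  rw [disjoint_iff, star, sh1, inf_bot_eq]

theorem inf_sup_le_inf_sup_inf (x y z : α) : x ⊓ (y ⊔ z) ≤ x ⊓ y ⊔ x ⊓ z := by
  set w := x ⊓ y ⊔ x ⊓ z
  have hw : w ≤ x := sup_le inf_le_left inf_le_left
  have le_himp : ∀ u, u ⊓ x ≤ w → u ≤ himp x w := fun u hu =>
    le_himp_of_inf_eq (le_antisymm (le_inf inf_le_left hu)
      (inf_le_inf_left u hw))
  have hy : y ≤ himp x w := le_himp y (inf_comm y x ▸ le_sup_left)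
  have hz : z ≤ himp x w := le_himp z (inf_comm z x ▸ le_sup_right)
  calc x ⊓ (y ⊔ z) ≤ x ⊓ himp x w := inf_le_inf_left x (sup_le hy hz)
    _ = x ⊓ w := sh1 x w
    _ ≤ w := inf_le_right

instance toDistribLattice : DistribLattice α :=
  DistribLattice.ofInfSupLe inf_sup_le_inf_sup_inf

end SemiHeyting

namespace DQD

variable {α : Type*} [DQD α]

theorem codisjoint_prime_of_disjoint {a b : α} (h : Disjoint a b) :
    Codisjoint (prime a) (prime b) := by
  rw [codisjoint_iff, ← prime_inf, h.eq_bot, prime_bot]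

theorem star_le_prime_star_prime (x : α) : star x ≤ prime (star (prime x)) :=
  ((disjoint_self_star x).symm.mono_right (prime_prime_le x)).le_of_codisjoint
    (codisjoint_prime_of_disjoint (disjoint_self_star (prime x)))

end DQD

theorem stmt17 {α : Type*} [DmsSt α] (x : α) :
    SemiHeyting.star x ≤ DQD.prime (SemiHeyting.star (DQD.prime x)) :=
  DQD.star_le_prime_star_prime x
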